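/- Let k : ℝ^d → ℝ be continuous and integrable with integrable Fourier transform k̂ satisfying k̂(ξ) ≥ 0 for all ξ ∈ ℝ^d, and with k(0) = 1. Let x_1,…,x_N ∈ ℝ^d, let K be the N×N matrix with entries K_{ij} = k(x_i − x_j), and let σ > 0. Then K + σ²I is invertible and its condition number satisfies κ(K + σ²I) := ‖K + σ²I‖ · ‖(K + σ²I)^{-1}‖ ≤ N/σ² + 1, where ‖·‖ denotes the operator (spectral) norm. -/

import Mathlib

/-!
Fourier inversion and the reality of `k̂` give `k y = ∫ cos (2π⟪ξ, y⟫) k̂(ξ) dξ`, with `k̂ ≥ 0` and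
`∫ k̂ = k 0 = 1`. Hence `K` is symmetric and, for `v ∈ ℝᴺ`,
`vᵀ K v = ∫ |∑ⱼ vⱼ e^{2πi⟪ξ, xⱼ⟫}|² k̂(ξ) dξ` lies between `0` and `N ‖v‖²` (Cauchy–Schwarz).
So the Rayleigh quotients of `K + σ²I` lie in `[σ², N + σ²]`, which bounds `‖K + σ²I‖` by
`N + σ²` and `‖(K + σ²I)⁻¹‖` by `σ⁻²`.
-/

open MeasureTheory

/-- The Fourier transform `k̂(ξ) = ∫ k(x) e^{−2πi⟨ξ,x⟩} dx` on `ℝ^d`. -/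
noncomputable def fourierT (d : ℕ) (k : EuclideanSpace ℝ (Fin d) → ℝ)
    (ξ : EuclideanSpace ℝ (Fin d)) : ℂ :=
  ∫ x : EuclideanSpace ℝ (Fin d),
    (k x : ℂ) * Complex.exp (-(2 * (Real.pi : ℂ) * Complex.I * ((∑ i, ξ i * x i : ℝ) : ℂ)))

/-- Operator (spectral) norm of a real square matrix, induced by the Euclidean norm. -/
noncomputable def opNorm {N : ℕ} (A : Matrix (Fin N) (Fin N) ℝ) : ℝ :=
  ‖Matrix.toEuclideanCLM (𝕜 := ℝ) A‖

open Real Finset Matrix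
open scoped RealInnerProductSpace FourierTransform

theorem sum_sum_mul_cos_sub {ι : Type*} (s : Finset ι) (v a : ι → ℝ) :
    ∑ i ∈ s, ∑ j ∈ s, v i * v j * cos (a i - a j) =
      (∑ i ∈ s, v i * cos (a i)) ^ 2 + (∑ i ∈ s, v i * sin (a i)) ^ 2 := by
  simp only [sq, sum_mul_sum, ← sum_add_distrib, cos_sub]
  refine sum_congr rfl fun i _ => sum_congr rfl fun j _ => by ring

theorem sum_sum_mul_cos_sub_nonneg {ι : Type*} (s : Finset ι) (v a : ι → ℝ) :
    0 ≤ ∑ i ∈ s, ∑ j ∈ s, v i * v j * cos (a i - a j) := by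
  rw [sum_sum_mul_cos_sub]
  positivity

theorem sum_sum_mul_cos_sub_le {ι : Type*} (s : Finset ι) (v a : ι → ℝ) :
    ∑ i ∈ s, ∑ j ∈ s, v i * v j * cos (a i - a j) ≤ #s * ∑ i ∈ s, v i ^ 2 := by
  have hcos := sum_mul_sq_le_sq_mul_sq s v (fun i => cos (a i))
  have hsin := sum_mul_sq_le_sq_mul_sq s v (fun i => sin (a i))
  calc _ ≤ (∑ i ∈ s, v i ^ 2) * ∑ i ∈ s, (cos (a i) ^ 2 + sin (a i) ^ 2) := by
        rw [sum_sum_mul_cos_sub, sum_add_distrib, mul_add]; exact add_le_add hcos hsin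
    _ = #s * ∑ i ∈ s, v i ^ 2 := by simp [mul_comm]

namespace ContinuousLinearMap

variable {𝕜 E : Type*} [RCLike 𝕜] [NormedAddCommGroup E] [InnerProductSpace 𝕜 E]

open RCLike in
theorem norm_le_of_abs_re_inner_self_le {T : E →L[𝕜] E} (hT : T.IsSymmetric) {c : ℝ} (hc : 0 ≤ c)
    (h : ∀ x, |re (inner 𝕜 (T x) x)| ≤ c * ‖x‖ ^ 2) : ‖T‖ ≤ c := by
  rw [T.norm_eq_iSup_rayleighQuotient hT]
  refine ciSup_le fun x => ?_
  rcases eq_or_ne x 0 with rfl | hx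
  · simpa using hc
  rw [rayleighQuotient, reApplyInnerSelf_apply, abs_div, abs_sq, div_le_iff₀ (by positivity)]
  exact h x

open RCLike in
theorem norm_le_inv_of_coercive {T S : E →L[𝕜] E} (hTS : ∀ w, T (S w) = w) {a : ℝ} (ha : 0 < a)
    (h : ∀ x, a * ‖x‖ ^ 2 ≤ re (inner 𝕜 (T x) x)) : ‖S‖ ≤ a⁻¹ := by
  refine opNorm_le_bound _ (inv_nonneg.2 ha.le) fun w => ?_
  rw [inv_mul_eq_div, le_div_iff₀ ha]
  have hcs : a * ‖S w‖ ^ 2 ≤ ‖w‖ * ‖S w‖ :=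
    calc a * ‖S w‖ ^ 2 ≤ re (inner 𝕜 (T (S w)) (S w)) := h (S w)
      _ ≤ ‖w‖ * ‖S w‖ := by rw [hTS]; exact (re_le_norm _).trans (norm_inner_le_norm _ _)
  rcases (norm_nonneg (S w)).eq_or_lt with h0 | hpos
  · rw [← h0]; simp
  · nlinarith

end ContinuousLinearMap

theorem EuclideanSpace.norm_sq_eq_dotProduct {n : Type*} [Fintype n] (x : EuclideanSpace ℝ n) :
    ‖x‖ ^ 2 = x.ofLp ⬝ᵥ x.ofLp := by
  rw [← real_inner_self_eq_norm_sq, EuclideanSpace.inner_eq_star_dotProduct]; rfl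

namespace Matrix

variable {n : Type*} [Fintype n]

theorem posDef_of_mul_dotProduct_le {M : Matrix n n ℝ} (hM : M.IsHermitian) {a : ℝ} (ha : 0 < a)
    (hlow : ∀ v, a * (v ⬝ᵥ v) ≤ v ⬝ᵥ M *ᵥ v) : M.PosDef := by
  refine .of_dotProduct_mulVec_pos hM fun v hv => ?_
  have hvv := dotProduct_self_star_pos_iff.2 hv
  simp only [star_trivial] at hvv ⊢
  exact (mul_pos ha hvv).trans_le (hlow v)

variable [DecidableEq n]

theorem inner_toEuclideanCLM_self (M : Matrix n n ℝ) (x : EuclideanSpace ℝ n) :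
    ⟪toEuclideanCLM (𝕜 := ℝ) M x, x⟫ = x.ofLp ⬝ᵥ M *ᵥ x.ofLp := by
  rw [real_inner_comm, inner_toEuclideanCLM]

theorem norm_toEuclideanCLM_mul_norm_inv_le {M : Matrix n n ℝ} (hM : M.IsHermitian) {a b : ℝ}
    (ha : 0 < a) (hb : 0 ≤ b) (hlow : ∀ v, a * (v ⬝ᵥ v) ≤ v ⬝ᵥ M *ᵥ v)
    (hup : ∀ v, v ⬝ᵥ M *ᵥ v ≤ b * (v ⬝ᵥ v)) :
    ‖toEuclideanCLM (𝕜 := ℝ) M‖ * ‖toEuclideanCLM (𝕜 := ℝ) M⁻¹‖ ≤ b / a := by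
  have hcoercive (x : EuclideanSpace ℝ n) : a * ‖x‖ ^ 2 ≤ ⟪toEuclideanCLM (𝕜 := ℝ) M x, x⟫ := by
    rw [inner_toEuclideanCLM_self, EuclideanSpace.norm_sq_eq_dotProduct]; exact hlow _
  have hnorm : ‖toEuclideanCLM (𝕜 := ℝ) M‖ ≤ b := by
    refine ContinuousLinearMap.norm_le_of_abs_re_inner_self_le
      (isSymmetric_toEuclideanLin_iff.2 hM) hb fun x => ?_
    rw [RCLike.re_to_real, abs_of_nonneg ((mul_nonneg ha.le (sq_nonneg _)).trans (hcoercive x)),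
      inner_toEuclideanCLM_self, EuclideanSpace.norm_sq_eq_dotProduct]
    exact hup _
  have hinv : toEuclideanCLM (𝕜 := ℝ) M * toEuclideanCLM (𝕜 := ℝ) M⁻¹ = 1 := by
    rw [← map_mul, mul_nonsing_inv _
      ((posDef_of_mul_dotProduct_le hM ha hlow).isUnit.map detMonoidHom), map_one]
  have hnorm_inv : ‖toEuclideanCLM (𝕜 := ℝ) M⁻¹‖ ≤ a⁻¹ :=
    ContinuousLinearMap.norm_le_inv_of_coercive (DFunLike.congr_fun hinv) ha hcoercive
  exact mul_le_mul hnorm hnorm_inv (norm_nonneg _) hb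

theorem norm_toEuclideanCLM_add_smul_one_mul_norm_inv_le {A : Matrix n n ℝ} (hA : A.IsHermitian)
    {b c : ℝ} (hb : 0 ≤ b) (hc : 0 < c) (h0 : ∀ v, 0 ≤ v ⬝ᵥ A *ᵥ v)
    (hAb : ∀ v, v ⬝ᵥ A *ᵥ v ≤ b * (v ⬝ᵥ v)) :
    IsUnit (A + c • 1) ∧
      ‖toEuclideanCLM (n := n) (𝕜 := ℝ) (A + c • 1)‖ *
        ‖toEuclideanCLM (n := n) (𝕜 := ℝ) (A + c • 1)⁻¹‖ ≤
        (b + c) / c := by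
  have hquad (v : n → ℝ) : v ⬝ᵥ (A + c • 1) *ᵥ v = v ⬝ᵥ A *ᵥ v + c * (v ⬝ᵥ v) := by
    simp [add_mulVec, smul_mulVec, dotProduct_add, dotProduct_smul]
  have hherm : (A + c • 1).IsHermitian := hA.add (isHermitian_one.smul (IsSelfAdjoint.all c))
  have hlow (v : n → ℝ) : c * (v ⬝ᵥ v) ≤ v ⬝ᵥ (A + c • 1) *ᵥ v := by
    rw [hquad]; linarith [h0 v]
  have hup (v : n → ℝ) : v ⬝ᵥ (A + c • 1) *ᵥ v ≤ (b + c) * (v ⬝ᵥ v) := by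
    rw [hquad]; linarith [hAb v]
  exact ⟨(posDef_of_mul_dotProduct_le hherm hc hlow).isUnit,
    norm_toEuclideanCLM_mul_norm_inv_le hherm hc (by positivity) hlow hup⟩

end Matrix

def kernelMatrix {V ι : Type*} [Sub V] (k : V → ℝ) (x : ι → V) : Matrix ι ι ℝ :=
  Matrix.of fun i j => k (x i - x j)

section CosineTransform

variable {V ι : Type*} [NormedAddCommGroup V] [InnerProductSpace ℝ V] [MeasurableSpace V]
  {μ : Measure V} {w k : V → ℝ}

theorem isHermitian_kernelMatrix_of_eq_integral_cos
    (hk : ∀ y, k y = ∫ ξ, cos (2 * π * ⟪ξ, y⟫) * w ξ ∂μ) (x : ι → V) :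
    (kernelMatrix k x).IsHermitian := by
  refine IsHermitian.ext fun i j => ?_
  simp only [kernelMatrix, of_apply, star_trivial, hk, ← neg_sub (x i), inner_neg_right,
    mul_neg, cos_neg]

variable [OpensMeasurableSpace V] [Fintype ι]

theorem integrable_cos_inner_mul (hw : Integrable w μ) (y : V) :
    Integrable (fun ξ => cos (2 * π * ⟪ξ, y⟫) * w ξ) μ :=
  hw.bdd_mul (by fun_prop) (.of_forall fun ξ => by simpa using abs_cos_le_one _)

theorem dotProduct_kernelMatrix_mulVec_eq_integral
    (hk : ∀ y, k y = ∫ ξ, cos (2 * π * ⟪ξ, y⟫) * w ξ ∂μ) (hw : Integrable w μ) (x : ι → V)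
    (v : ι → ℝ) : v ⬝ᵥ kernelMatrix k x *ᵥ v =
      ∫ ξ, (∑ i, ∑ j, v i * v j * cos (2 * π * ⟪ξ, x i⟫ - 2 * π * ⟪ξ, x j⟫)) * w ξ ∂μ := by
  have hint (i j : ι) :
      Integrable (fun ξ => v i * v j * (cos (2 * π * ⟪ξ, x i - x j⟫) * w ξ)) μ :=
    (integrable_cos_inner_mul hw (x i - x j)).const_mul _
  calc v ⬝ᵥ kernelMatrix k x *ᵥ v
      = ∑ i, ∑ j, ∫ ξ, v i * v j * (cos (2 * π * ⟪ξ, x i - x j⟫) * w ξ) ∂μ := by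
        simp only [dotProduct, mulVec, kernelMatrix, of_apply, mul_sum, integral_const_mul, hk]
        exact sum_congr rfl fun i _ => sum_congr rfl fun j _ => by ring
    _ = ∫ ξ, ∑ i, ∑ j, v i * v j * (cos (2 * π * ⟪ξ, x i - x j⟫) * w ξ) ∂μ := by
        rw [integral_finsetSum _ fun i _ => integrable_finsetSum _ fun j _ => hint i j]
        exact sum_congr rfl fun i _ => (integral_finsetSum _ fun j _ => hint i j).symm
    _ = _ := by simp only [sum_mul, inner_sub_right, mul_sub, mul_assoc]

theorem dotProduct_kernelMatrix_mulVec_nonneg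
    (hk : ∀ y, k y = ∫ ξ, cos (2 * π * ⟪ξ, y⟫) * w ξ ∂μ) (hw : Integrable w μ)
    (hw0 : 0 ≤ᵐ[μ] w) (x : ι → V) (v : ι → ℝ) : 0 ≤ v ⬝ᵥ kernelMatrix k x *ᵥ v := by
  rw [dotProduct_kernelMatrix_mulVec_eq_integral hk hw]
  exact integral_nonneg_of_ae
    (hw0.mono fun ξ hξ => mul_nonneg (sum_sum_mul_cos_sub_nonneg _ _ _) hξ)

theorem dotProduct_kernelMatrix_mulVec_le
    (hk : ∀ y, k y = ∫ ξ, cos (2 * π * ⟪ξ, y⟫) * w ξ ∂μ) (hw : Integrable w μ)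
    (hw0 : 0 ≤ᵐ[μ] w) (x : ι → V) (v : ι → ℝ) :
    v ⬝ᵥ kernelMatrix k x *ᵥ v ≤ Fintype.card ι * k 0 * (v ⬝ᵥ v) := by
  have hk0 : k 0 = ∫ ξ, w ξ ∂μ := by simp [hk]
  rw [dotProduct_kernelMatrix_mulVec_eq_integral hk hw, hk0, mul_right_comm,
    ← integral_const_mul]
  refine integral_mono_of_nonneg
    (hw0.mono fun ξ hξ => mul_nonneg (sum_sum_mul_cos_sub_nonneg _ _ _) hξ)
    (hw.const_mul _) (hw0.mono fun ξ hξ => mul_le_mul_of_nonneg_right ?_ hξ)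
  simpa [dotProduct, sq] using sum_sum_mul_cos_sub_le univ v fun i => 2 * π * ⟪ξ, x i⟫

end CosineTransform

section FourierT

variable {d : ℕ} {k : EuclideanSpace ℝ (Fin d) → ℝ}

theorem fourierT_eq_fourier : fourierT d k = 𝓕 (fun x => (k x : ℂ)) := by
  ext ξ
  rw [Real.fourier_eq', fourierT]
  congr 1 with x
  simp only [smul_eq_mul, PiLp.inner_apply, RCLike.inner_apply, conj_trivial]
  push_cast
  ring_nf

theorem eq_integral_cos_mul_re_fourierT (hk_cont : Continuous k) (hk_int : Integrable k)
    (hkhat_int : Integrable (fourierT d k)) (hkhat_real : ∀ ξ, (fourierT d k ξ).im = 0)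
    (y : EuclideanSpace ℝ (Fin d)) :
    k y = ∫ ξ, cos (2 * π * ⟪ξ, y⟫) * (fourierT d k ξ).re := by
  have hinv := congrFun ((show Continuous fun x => (k x : ℂ) by fun_prop).fourierInv_fourier_eq
    hk_int.ofReal (fourierT_eq_fourier (k := k) ▸ hkhat_int)) y
  rw [Real.fourierInv_eq', ← fourierT_eq_fourier] at hinv
  have hint :
      Integrable fun ξ => Complex.exp (↑(2 * π * ⟪ξ, y⟫) * Complex.I) • fourierT d k ξ :=
    hkhat_int.bdd_mul (by fun_prop) (.of_forall fun ξ => (Complex.norm_exp_ofReal_mul_I _).le)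
  rw [← Complex.ofReal_re (k y), ← hinv, ← RCLike.re_to_complex, ← integral_re hint]
  congr 1 with ξ
  rw [smul_eq_mul, RCLike.re_to_complex, Complex.mul_re, Complex.exp_ofReal_mul_I_re,
    Complex.exp_ofReal_mul_I_im, hkhat_real, mul_zero, sub_zero]

end FourierT

theorem stmt_13 (d N : ℕ) (k : EuclideanSpace ℝ (Fin d) → ℝ)
    (hk_cont : Continuous k) (hk_int : Integrable k)
    (hkhat_int : Integrable (fourierT d k))
    (hkhat_real : ∀ ξ, (fourierT d k ξ).im = 0)
    (hkhat_nonneg : ∀ ξ, 0 ≤ (fourierT d k ξ).re)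
    (hk0 : k 0 = 1)
    (x : Fin N → EuclideanSpace ℝ (Fin d))
    (K : Matrix (Fin N) (Fin N) ℝ) (hK : ∀ i j, K i j = k (x i - x j))
    (σ : ℝ) (hσ : 0 < σ) :
    IsUnit (K + σ ^ 2 • 1) ∧
    opNorm (K + σ ^ 2 • 1) * opNorm ((K + σ ^ 2 • 1)⁻¹) ≤ N / σ ^ 2 + 1 := by
  obtain rfl : K = kernelMatrix k x := Matrix.ext hK
  have hk := eq_integral_cos_mul_re_fourierT hk_cont hk_int hkhat_int hkhat_real
  have hw0 : 0 ≤ᵐ[volume] fun ξ => (fourierT d k ξ).re := .of_forall hkhat_nonneg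
  have hbound := norm_toEuclideanCLM_add_smul_one_mul_norm_inv_le
    (isHermitian_kernelMatrix_of_eq_integral_cos hk x) (Nat.cast_nonneg N) (pow_pos hσ 2)
    (dotProduct_kernelMatrix_mulVec_nonneg hk hkhat_int.re hw0 x)
    (by simpa [hk0] using dotProduct_kernelMatrix_mulVec_le hk hkhat_int.re hw0 x)
  refine ⟨hbound.1, hbound.2.trans_eq ?_⟩
  field_simp
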